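/- Let m : X × X → X be a continuous map such that Δ(f)(s,t) = f(m(s,t)) for all f ∈ A and s, t ∈ X. Assume that for all f, g ∈ A the functions Δ(f)·(1 ⊗ g) : (s,t) ↦ Δ(f)(s,t)·g(t) and Δ(f)·(g ⊗ 1) : (s,t) ↦ Δ(f)(s,t)·g(s) vanish at infinity on X × X, and that the linear spans of {Δ(f)·(1 ⊗ g) : f, g ∈ A} and of {Δ(f)·(g ⊗ 1) : f, g ∈ A} are each dense in C₀(X × X, ℂ). Then m satisfies the cancellation laws: m(s,t) = m(r,t) implies s = r, and m(t,s) = m(t,r) implies s = r. -/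

import Mathlib

open scoped ZeroAtInfty BoundedContinuousFunction

/-! Point evaluations are continuous linear functionals on `C₀(X × X, ℂ)`, so two of them that
agree on a set with dense span agree everywhere; by Urysohn's lemma `C₀` functions separate points.
If `m (s, t) = m (r, t)`, every generator `(Δ f) (1 ⊗ g)` takes the same value at `(s, t)` and
`(r, t)`, hence `(s, t) = (r, t)`; the right cancellation law is symmetric, using `(Δ f) (g ⊗ 1)`. -/

namespace ZeroAtInftyContinuousMap

variable {α : Type*} [TopologicalSpace α]

noncomputable def evalCLM (𝕜 : Type*) {β : Type*} [NormedField 𝕜] [SeminormedAddCommGroup β]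
    [NormedSpace 𝕜 β] (x : α) : C₀(α, β) →L[𝕜] β :=
  LinearMap.mkContinuous
    { toFun := fun f => f x
      map_add' := fun _ _ => rfl
      map_smul' := fun _ _ => rfl }
    1 fun f => by simpa using f.toBCF.norm_coe_le_norm x

variable {𝕜 : Type*} [RCLike 𝕜]

theorem eq_of_forall_apply_eq [LocallyCompactSpace α] [T2Space α] {x y : α}
    (h : ∀ f : C₀(α, 𝕜), f x = f y) : x = y := by
  by_contra hxy
  obtain ⟨φ, hφx, hφy, hφ, -⟩ := exists_continuous_one_zero_of_isCompact isCompact_singleton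
    isClosed_singleton (Set.disjoint_singleton.mpr hxy)
  have hφ' : HasCompactSupport (fun z => (φ z : 𝕜)) := hφ.comp_left RCLike.ofReal_zero
  let f : C₀(α, 𝕜) :=
    ⟨⟨fun z => (φ z : 𝕜), RCLike.continuous_ofReal.comp φ.continuous⟩, hφ'.is_zero_at_infty⟩
  simpa [f, hφx rfl, hφy rfl] using h f

theorem eq_of_dense_span_of_forall_apply_eq [LocallyCompactSpace α] [T2Space α]
    {S : Set C₀(α, 𝕜)} (hS : Dense (Submodule.span 𝕜 S : Set C₀(α, 𝕜))) {x y : α}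
    (h : ∀ f ∈ S, f x = f y) : x = y :=
  eq_of_forall_apply_eq fun f =>
    congrArg (· f) (ContinuousLinearMap.ext_on hS (f := evalCLM 𝕜 x) (g := evalCLM 𝕜 y) h)

end ZeroAtInftyContinuousMap

theorem stmt5_general {X : Type*} [TopologicalSpace X] [LocallyCompactSpace X] [T2Space X]
    (Δ : C₀(X, ℂ) →⋆ₙₐ[ℂ] ((X × X) →ᵇ ℂ))
    (m : X × X → X)
    (hΔ : ∀ (f : C₀(X, ℂ)) (s t : X), Δ f (s, t) = f (m (s, t)))
    (hdense₁ : Dense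
      ((Submodule.span ℂ {u : C₀(X × X, ℂ) | ∃ f g : C₀(X, ℂ),
          ∀ p : X × X, u p = Δ f p * g p.2} : Submodule ℂ C₀(X × X, ℂ)) :
        Set C₀(X × X, ℂ)))
    (hdense₂ : Dense
      ((Submodule.span ℂ {u : C₀(X × X, ℂ) | ∃ f g : C₀(X, ℂ),
          ∀ p : X × X, u p = Δ f p * g p.1} : Submodule ℂ C₀(X × X, ℂ)) :
        Set C₀(X × X, ℂ))) :
    (∀ r s t : X, m (s, t) = m (r, t) → s = r) ∧
    (∀ r s t : X, m (t, s) = m (t, r) → s = r) := by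
  refine ⟨fun r s t h => ?_, fun r s t h => ?_⟩
  · have hst : ((s, t) : X × X) = (r, t) := by
      refine ZeroAtInftyContinuousMap.eq_of_dense_span_of_forall_apply_eq hdense₁ ?_
      rintro u ⟨f, g, hu⟩
      rw [hu, hu, hΔ, hΔ, h]
    exact congrArg Prod.fst hst
  · have hts : ((t, s) : X × X) = (t, r) := by
      refine ZeroAtInftyContinuousMap.eq_of_dense_span_of_forall_apply_eq hdense₂ ?_
      rintro u ⟨f, g, hu⟩
      rw [hu, hu, hΔ, hΔ, h]
    exact congrArg Prod.snd hts

/-- Paper's Proposition 1.4: density of (the spans of) `Δ(A)(1 ⊗ A)` and `Δ(A)(A ⊗ 1)` in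
`C₀(X × X)` implies the cancellation laws for the induced product on `X`. -/
theorem stmt5 {X : Type*} [TopologicalSpace X] [LocallyCompactSpace X] [T2Space X]
    (Δ : C₀(X, ℂ) →⋆ₙₐ[ℂ] ((X × X) →ᵇ ℂ))
    (m : X × X → X) (hm : Continuous m)
    (hΔ : ∀ (f : C₀(X, ℂ)) (s t : X), Δ f (s, t) = f (m (s, t)))
    (hvan₁ : ∀ f g : C₀(X, ℂ),
      Filter.Tendsto (fun p : X × X => Δ f p * g p.2)
        (Filter.cocompact (X × X)) (nhds 0))
    (hvan₂ : ∀ f g : C₀(X, ℂ),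
      Filter.Tendsto (fun p : X × X => Δ f p * g p.1)
        (Filter.cocompact (X × X)) (nhds 0))
    (hdense₁ : Dense
      ((Submodule.span ℂ {u : C₀(X × X, ℂ) | ∃ f g : C₀(X, ℂ),
          ∀ p : X × X, u p = Δ f p * g p.2} : Submodule ℂ C₀(X × X, ℂ)) :
        Set C₀(X × X, ℂ)))
    (hdense₂ : Dense
      ((Submodule.span ℂ {u : C₀(X × X, ℂ) | ∃ f g : C₀(X, ℂ),
          ∀ p : X × X, u p = Δ f p * g p.1} : Submodule ℂ C₀(X × X, ℂ)) :
        Set C₀(X × X, ℂ))) :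
    (∀ r s t : X, m (s, t) = m (r, t) → s = r) ∧
    (∀ r s t : X, m (t, s) = m (t, r) → s = r) :=
  stmt5_general Δ m hΔ hdense₁ hdense₂
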